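/- For the pair (A_0, A_1) = (M_0, M_1F), and likewise for the pair (A_0, A_1) = (M_0F, M_1), the associated Gauss-type map is not continuous: there exists no continuous map G : Δ → Δ such that for each a ∈ {0,1} and every x ∈ A_a[Δ] one has G(x) = A_a^{−1}x/‖A_a^{−1}x‖₁. -/

import Mathlib

/-!
Write `e_j` for the vertices of the simplex. Since `M_0 = NFR` and `M_1 = FNFR`, and every
column of `N` except column `0` is fixed by the swap `F`, the matrices `M_0` and `M_1` agree
outside column `0`. Hence `M_0 e_1 = (M_1 F) e_0` and `(M_0 F) e_0 = M_1 e_1`: in each pair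
two distinct vertices have the same image `x`, which lies in `A_0[Δ] ∩ A_1[Δ]`, and the two
inverse branches send `x` back to these two different vertices. So no map at all, continuous
or not, agrees with both branches.
-/

open Matrix

abbrev MatZ (n : ℕ) : Type := Matrix (Fin (n + 1)) (Fin (n + 1)) ℤ

def inSigma {n : ℕ} (A : MatZ n) : Prop :=
  IsUnit A.det ∧ ∀ i j, 0 ≤ A i j

def IsPermMat {n : ℕ} (A : MatZ n) : Prop :=
  ∃ σ : Equiv.Perm (Fin (n + 1)), ∀ i j, A i j = if i = σ j then 1 else 0

noncomputable def toR {n : ℕ} (A : MatZ n) : Matrix (Fin (n + 1)) (Fin (n + 1)) ℝ :=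
  A.map ((↑) : ℤ → ℝ)

noncomputable def projAct {n : ℕ} (A : Matrix (Fin (n + 1)) (Fin (n + 1)) ℝ)
    (x : Fin (n + 1) → ℝ) : Fin (n + 1) → ℝ :=
  (∑ i, (A *ᵥ x) i)⁻¹ • (A *ᵥ x)

noncomputable def simg {n : ℕ} (A : MatZ n) : Set (Fin (n + 1) → ℝ) :=
  projAct (toR A) '' stdSimplex ℝ (Fin (n + 1))

def wordProd {n : ℕ} (A0 A1 : MatZ n) (w : List Bool) : MatZ n :=
  (w.map (fun b => bif b then A1 else A0)).prod

def Contractive {n : ℕ} (A0 A1 : MatZ n) : Prop :=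
  ∀ a : ℕ → Bool, ∃ p,
    (⋂ t : ℕ, simg (wordProd A0 A1 ((List.range t).map a))) = {p}

def Nmat (n : ℕ) : MatZ n :=
  Matrix.of fun i j => if i = j then 1 else if j = 1 ∧ i = 0 then 1 else 0

def Fmat (n : ℕ) : MatZ n :=
  Matrix.of fun i j => if i = Equiv.swap (0 : Fin (n + 1)) 1 j then 1 else 0

def Rmat (n : ℕ) : MatZ n :=
  Matrix.of fun i j => if i = j + 1 then 1 else 0

def Lmat (n : ℕ) : MatZ n := Fmat n * Nmat n * Fmat n

def Mon0 (n : ℕ) : MatZ n := Nmat n * Fmat n * Rmat n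

def Mon1 (n : ℕ) : MatZ n := Lmat n * Rmat n

def permMat {n : ℕ} (σ : Equiv.Perm (Fin (n + 1))) : MatZ n :=
  Matrix.of fun i j => if i = σ j then 1 else 0

section

variable {n : ℕ}

lemma mul_permMat_apply (A : MatZ n) (σ : Equiv.Perm (Fin (n + 1))) (i j : Fin (n + 1)) :
    (A * permMat σ) i j = A i (σ j) := by
  simp [permMat, mul_apply]

lemma permMat_mul_apply (σ : Equiv.Perm (Fin (n + 1))) (A : MatZ n) (i j : Fin (n + 1)) :
    (permMat σ * A) i j = A (σ.symm i) j := by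
  simp [permMat, mul_apply, ← Equiv.symm_apply_eq]

lemma permMat_nonneg (σ : Equiv.Perm (Fin (n + 1))) (i j : Fin (n + 1)) :
    0 ≤ permMat σ i j := by
  simp only [permMat, of_apply]; split_ifs <;> simp

lemma isUnit_det_permMat (σ : Equiv.Perm (Fin (n + 1))) : IsUnit (permMat σ).det :=
  isUnit_det_of_left_inverse (B := permMat σ⁻¹) <| by
    ext i j
    rw [permMat_mul_apply]
    simp [permMat, one_apply, Equiv.Perm.inv_def]

lemma inSigma_permMat (σ : Equiv.Perm (Fin (n + 1))) : inSigma (permMat σ) :=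
  ⟨isUnit_det_permMat σ, permMat_nonneg σ⟩

lemma Fmat_eq_permMat : Fmat n = permMat (Equiv.swap 0 1) := rfl

lemma Rmat_eq_permMat : Rmat n = permMat (Equiv.addRight 1) := rfl

lemma inSigma.mul {A B : MatZ n} (hA : inSigma A) (hB : inSigma B) : inSigma (A * B) :=
  ⟨by rw [det_mul]; exact hA.1.mul hB.1,
    fun i j => by
      rw [mul_apply]
      exact Finset.sum_nonneg fun k _ => mul_nonneg (hA.2 i k) (hB.2 k j)⟩

lemma inSigma_Nmat : inSigma (Nmat n) := by
  refine ⟨?_, fun i j => ?_⟩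
  · have hN : (Nmat n).IsUpperTriangular := fun i j (hji : j < i) => by
      simp only [Nmat, of_apply]
      rw [if_neg hji.ne', if_neg]
      rintro ⟨rfl, rfl⟩
      exact (Fin.zero_le _).not_gt hji
    rw [det_of_isUpperTriangular hN]
    simp [Nmat]
  · simp only [Nmat, of_apply]; split_ifs <;> simp

lemma inSigma_Fmat : inSigma (Fmat n) := inSigma_permMat _

lemma inSigma_Rmat : inSigma (Rmat n) := inSigma_permMat (Equiv.addRight 1)

lemma inSigma_Mon0 : inSigma (Mon0 n) :=
  (inSigma_Nmat.mul inSigma_Fmat).mul inSigma_Rmat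

lemma inSigma_Mon1 : inSigma (Mon1 n) :=
  ((inSigma_Fmat.mul inSigma_Nmat).mul inSigma_Fmat).mul inSigma_Rmat

lemma Nmat_swap_apply {m : Fin (n + 1)} (hm : m ≠ 0) (i : Fin (n + 1)) :
    Nmat n (Equiv.swap 0 1 i) m = Nmat n i m := by
  by_cases h1 : m = 1
  · subst h1
    rcases eq_or_ne i 0 with rfl | hi0
    · simp [Nmat]
    rcases eq_or_ne i 1 with rfl | hi1
    · simp [Nmat]
    rw [Equiv.swap_apply_of_ne_of_ne hi0 hi1]
  · have hN : ∀ a, Nmat n a m = if a = m then 1 else 0 := fun a => by simp [Nmat, h1]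
    simp only [hN, Equiv.swap_apply_eq_iff, Equiv.swap_apply_of_ne_of_ne hm h1]

lemma Mon0_apply_eq_Mon1_apply {j : Fin (n + 1)} (hj : j ≠ 0) (i : Fin (n + 1)) :
    Mon0 n i j = Mon1 n i j := by
  have hm : Equiv.swap 0 1 (j + 1) ≠ 0 := by
    simpa [Equiv.swap_apply_eq_iff] using hj
  simp only [Mon0, Mon1, Lmat, Fmat_eq_permMat, Rmat_eq_permMat, mul_permMat_apply,
    permMat_mul_apply, Equiv.symm_swap, Equiv.coe_addRight, Nmat_swap_apply hm]

lemma projAct_inv_projAct {A : Matrix (Fin (n + 1)) (Fin (n + 1)) ℝ} (hA : IsUnit A.det)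
    {y : Fin (n + 1) → ℝ} (hy : ∑ i, y i = 1) (hAy : ∑ i, (A *ᵥ y) i ≠ 0) :
    projAct A⁻¹ (projAct A y) = y := by
  set s := ∑ i, (A *ᵥ y) i
  have hinv : A⁻¹ *ᵥ projAct A y = s⁻¹ • y := by
    rw [projAct, mulVec_smul, mulVec_mulVec, nonsing_inv_mul A hA, one_mulVec]
  have hsum : ∑ i, (s⁻¹ • y) i = s⁻¹ := by
    simp [← Finset.mul_sum, hy]
  rw [projAct, hinv, hsum, inv_inv, smul_smul, mul_inv_cancel₀ hAy, one_smul]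

lemma isUnit_det_toR {A : MatZ n} (hA : IsUnit A.det) : IsUnit (toR A).det := by
  have := hA.map (Int.castRingHom ℝ)
  rwa [RingHom.map_det] at this

lemma sum_toR_mulVec_pos {A : MatZ n} (hA : inSigma A) {y : Fin (n + 1) → ℝ}
    (hy : y ∈ stdSimplex ℝ (Fin (n + 1))) : 0 < ∑ i, (toR A *ᵥ y) i := by
  have hnonneg : ∀ i, 0 ≤ (toR A *ᵥ y) i := fun i =>
    dotProduct_nonneg_of_nonneg (fun j => Int.cast_nonneg (hA.2 i j)) hy.1
  have hne : toR A *ᵥ y ≠ 0 := by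
    have hinj : Function.Injective (toR A).mulVec := mulVec_injective_iff_isUnit.mpr
      ((isUnit_iff_isUnit_det _).mpr (isUnit_det_toR hA.1))
    rw [← mulVec_zero (toR A), Ne, hinj.eq_iff]
    rintro rfl
    simpa using hy.2
  obtain ⟨i, hi⟩ := Function.ne_iff.mp hne
  exact Finset.sum_pos' (fun i _ => hnonneg i) ⟨i, Finset.mem_univ _, (hnonneg i).lt_of_ne' hi⟩

lemma projAct_inv_projAct_of_inSigma {A : MatZ n} (hA : inSigma A) {y : Fin (n + 1) → ℝ}
    (hy : y ∈ stdSimplex ℝ (Fin (n + 1))) : projAct (toR A)⁻¹ (projAct (toR A) y) = y :=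
  projAct_inv_projAct (isUnit_det_toR hA.1) hy.2 (sum_toR_mulVec_pos hA hy).ne'

theorem not_exists_inverse_branches_of_col_eq {A0 A1 : MatZ n} (hA0 : inSigma A0)
    (hA1 : inSigma A1) {j0 j1 : Fin (n + 1)} (hj : j0 ≠ j1) (hcol : ∀ i, A0 i j0 = A1 i j1) :
    ¬ ∃ G : (Fin (n + 1) → ℝ) → (Fin (n + 1) → ℝ),
      (∀ x ∈ simg A0, G x = projAct (toR A0)⁻¹ x) ∧
      (∀ x ∈ simg A1, G x = projAct (toR A1)⁻¹ x) := by
  rintro ⟨G, hG0, hG1⟩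
  have hvertex : projAct (toR A0) (Pi.single j0 1) = projAct (toR A1) (Pi.single j1 1) := by
    have : toR A0 *ᵥ Pi.single j0 1 = toR A1 *ᵥ Pi.single j1 1 := by
      ext i
      simp [toR, hcol]
    rw [projAct, projAct, this]
  set x := projAct (toR A0) (Pi.single j0 1)
  have h0 : G x = Pi.single j0 1 := by
    rw [hG0 x ⟨_, single_mem_stdSimplex ℝ j0, rfl⟩,
      projAct_inv_projAct_of_inSigma hA0 (single_mem_stdSimplex ℝ j0)]
  have h1 : G x = Pi.single j1 1 := by
    rw [hvertex, hG1 _ ⟨_, single_mem_stdSimplex ℝ j1, rfl⟩,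
      projAct_inv_projAct_of_inSigma hA1 (single_mem_stdSimplex ℝ j1)]
  simpa [hj] using congrFun (h0.symm.trans h1) j0

end

theorem stmt7 (n : ℕ) (hn : 1 ≤ n) (A0 A1 : MatZ n)
    (h : (A0, A1) = (Mon0 n, Mon1 n * Fmat n) ∨ (A0, A1) = (Mon0 n * Fmat n, Mon1 n)) :
    ¬ ∃ G : (Fin (n + 1) → ℝ) → (Fin (n + 1) → ℝ),
      ContinuousOn G (stdSimplex ℝ (Fin (n + 1))) ∧
      Set.MapsTo G (stdSimplex ℝ (Fin (n + 1))) (stdSimplex ℝ (Fin (n + 1))) ∧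
      (∀ x ∈ simg A0, G x = projAct (toR A0)⁻¹ x) ∧
      (∀ x ∈ simg A1, G x = projAct (toR A1)⁻¹ x) := by
  have h10 : (1 : Fin (n + 1)) ≠ 0 := by
    have : NeZero n := ⟨by omega⟩
    exact Fin.one_pos'.ne'
  have hcol (i : Fin (n + 1)) : Mon0 n i 1 = (Mon1 n * Fmat n) i 0 := by
    rw [Fmat_eq_permMat, mul_permMat_apply, Equiv.swap_apply_left,
      Mon0_apply_eq_Mon1_apply h10]
  have hcol' (i : Fin (n + 1)) : (Mon0 n * Fmat n) i 0 = Mon1 n i 1 := by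
    rw [Fmat_eq_permMat, mul_permMat_apply, Equiv.swap_apply_left,
      Mon0_apply_eq_Mon1_apply h10]
  rintro ⟨G, -, -, hG⟩
  rcases h with h | h <;> obtain ⟨rfl, rfl⟩ := Prod.mk.inj h
  · exact not_exists_inverse_branches_of_col_eq inSigma_Mon0 (inSigma_Mon1.mul inSigma_Fmat)
      h10 hcol ⟨G, hG⟩
  · exact not_exists_inverse_branches_of_col_eq (inSigma_Mon0.mul inSigma_Fmat) inSigma_Mon1
      h10.symm hcol' ⟨G, hG⟩
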